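/- Let s ≥ 1 and let G ≤ Aut(T) be a torsion-free self-similar group such that the quotient G/K_0 is again torsion-free, where K_0 = β_0⁻¹(β_0(G) ∩ N_0) is the zeroth splitting kernel. Then Bas_s(G) is torsion-free. -/

import Mathlib

/-!
Groups of automorphisms of the `m`-regular rooted tree, encoded via portraits:
an automorphism is determined by the family of its labels (local actions)
`label : List (Fin m) → Equiv.Perm (Fin m)`.
-/

namespace Basilica

/-- An automorphism of the `m`-regular rooted tree, given by its portrait. -/
structure TreeAut (m : ℕ) where
  label : List (Fin m) → Equiv.Perm (Fin m)

namespace TreeAut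

variable {m : ℕ}

lemma ext_label {a b : TreeAut m} (h : ∀ u, a.label u = b.label u) : a = b := by
  cases a
  cases b
  simp only [mk.injEq]
  exact funext h

/-- The section of an automorphism at a vertex. -/
def sec (a : TreeAut m) (v : List (Fin m)) : TreeAut m := ⟨fun u => a.label (v ++ u)⟩

@[simp] lemma sec_label (a : TreeAut m) (v u : List (Fin m)) :
    (a.sec v).label u = a.label (v ++ u) := rfl

@[simp] lemma sec_nil (a : TreeAut m) : a.sec [] = a := rfl

lemma sec_sec (a : TreeAut m) (v w : List (Fin m)) : (a.sec v).sec w = a.sec (v ++ w) :=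
  ext_label fun u => by simp [List.append_assoc]

/-- The action of a tree automorphism on the vertices (finite words). -/
def apply : TreeAut m → List (Fin m) → List (Fin m)
  | _, [] => []
  | a, x :: u => a.label [] x :: (a.sec [x]).apply u

/-- The inverse action of a tree automorphism on the vertices. -/
def invApply : TreeAut m → List (Fin m) → List (Fin m)
  | _, [] => []
  | a, x :: u => (a.label [])⁻¹ x :: (a.sec [(a.label [])⁻¹ x]).invApply u

instance : One (TreeAut m) := ⟨⟨fun _ => 1⟩⟩
instance : Mul (TreeAut m) := ⟨fun a b => ⟨fun u => a.label (b.apply u) * b.label u⟩⟩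
instance : Inv (TreeAut m) := ⟨fun a => ⟨fun u => (a.label (a.invApply u))⁻¹⟩⟩

@[simp] lemma one_label (u : List (Fin m)) : (1 : TreeAut m).label u = 1 := rfl

@[simp] lemma mul_label (a b : TreeAut m) (u : List (Fin m)) :
    (a * b).label u = a.label (b.apply u) * b.label u := rfl

@[simp] lemma inv_label (a : TreeAut m) (u : List (Fin m)) :
    a⁻¹.label u = (a.label (a.invApply u))⁻¹ := rfl

@[simp] lemma one_sec (v : List (Fin m)) : (1 : TreeAut m).sec v = 1 := rfl

@[simp] lemma apply_nil (a : TreeAut m) : a.apply [] = [] := rfl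

lemma apply_cons (a : TreeAut m) (x : Fin m) (u : List (Fin m)) :
    a.apply (x :: u) = a.label [] x :: (a.sec [x]).apply u := rfl

@[simp] lemma one_apply (u : List (Fin m)) : (1 : TreeAut m).apply u = u := by
  induction u with
  | nil => rfl
  | cons x u ih => simp [apply_cons, ih]

lemma apply_append (a : TreeAut m) (v u : List (Fin m)) :
    a.apply (v ++ u) = a.apply v ++ (a.sec v).apply u := by
  induction v generalizing a with
  | nil => simp
  | cons x v ih =>
      simp only [List.cons_append, apply_cons, ih, sec_sec, List.singleton_append,
        List.nil_append]

lemma mul_sec (a b : TreeAut m) (v : List (Fin m)) :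
    (a * b).sec v = a.sec (b.apply v) * b.sec v :=
  ext_label fun u => by simp [apply_append]

lemma mul_apply (a b : TreeAut m) (u : List (Fin m)) :
    (a * b).apply u = a.apply (b.apply u) := by
  induction u generalizing a b with
  | nil => rfl
  | cons x u ih =>
      rw [apply_cons, mul_sec, ih]
      simp [apply_cons, Equiv.Perm.mul_apply]

lemma invApply_apply (a : TreeAut m) (u : List (Fin m)) : a.invApply (a.apply u) = u := by
  induction u generalizing a with
  | nil => rfl
  | cons x u ih => simp [apply_cons, invApply, ih]

lemma apply_invApply (a : TreeAut m) (u : List (Fin m)) : a.apply (a.invApply u) = u := by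
  induction u generalizing a with
  | nil => rfl
  | cons x u ih => simp [invApply, apply_cons, ih]

instance : Group (TreeAut m) where
  mul_assoc a b c := ext_label fun u => by simp [mul_apply, mul_assoc]
  one_mul a := ext_label fun u => by simp
  mul_one a := ext_label fun u => by simp
  inv_mul_cancel a := ext_label fun u => by simp [invApply_apply]

lemma apply_injective (a : TreeAut m) : Function.Injective a.apply := by
  intro x y h
  have hx := invApply_apply a x
  rw [h, invApply_apply] at hx
  exact hx.symm

@[simp] lemma apply_length (a : TreeAut m) (u : List (Fin m)) :
    (a.apply u).length = u.length := by
  induction u generalizing a with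
  | nil => rfl
  | cons x u ih => simp [apply_cons, ih]

/-- `cons ρ f` is `ρ · ψ₁⁻¹(f 0, …, f (m-1))`: the automorphism with root label `ρ`
and first-layer sections `f x`. -/
def cons (ρ : Equiv.Perm (Fin m)) (f : Fin m → TreeAut m) : TreeAut m :=
  ⟨fun u =>
    match u with
    | [] => ρ
    | x :: v => (f x).label v⟩

end TreeAut

variable {m : ℕ}

/-- The `n`-th layer stabiliser `St_G(n)` of a group `G` of tree automorphisms. -/
def layerStab (G : Subgroup (TreeAut m)) (n : ℕ) : Subgroup (TreeAut m) where
  carrier := {g | g ∈ G ∧ ∀ u : List (Fin m), u.length = n → g.apply u = u}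
  one_mem' := ⟨G.one_mem, fun u _ => TreeAut.one_apply u⟩
  mul_mem' := by
    rintro a b ⟨haG, ha⟩ ⟨hbG, hb⟩
    refine ⟨G.mul_mem haG hbG, fun u hu => ?_⟩
    rw [TreeAut.mul_apply, hb u hu, ha u hu]
  inv_mem' := by
    rintro a ⟨haG, ha⟩
    refine ⟨G.inv_mem haG, fun u hu => ?_⟩
    apply TreeAut.apply_injective a
    rw [← TreeAut.mul_apply, mul_inv_cancel, TreeAut.one_apply, ha u hu]

/-- A group of tree automorphisms acts spherically transitively if it acts
transitively on every layer. -/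
def SphericallyTransitive (G : Subgroup (TreeAut m)) : Prop :=
  ∀ u v : List (Fin m), u.length = v.length → ∃ g ∈ G, g.apply u = v

/-- A group of tree automorphisms is self-similar if it is closed under sections. -/
def SelfSimilar (G : Subgroup (TreeAut m)) : Prop :=
  ∀ g ∈ G, ∀ v : List (Fin m), g.sec v ∈ G

/-- A spherically transitive group is fractal if `st_G(u)|_u = G` for all vertices `u`. -/
def Fractal (G : Subgroup (TreeAut m)) : Prop :=
  SphericallyTransitive G ∧
    ∀ u : List (Fin m),
      {h : TreeAut m | ∃ g ∈ G, g.apply u = u ∧ g.sec u = h} = (G : Set (TreeAut m))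

/-- A spherically transitive group is strongly fractal if `St_G(1)|_x = G` for all `x ∈ X`. -/
def StronglyFractal (G : Subgroup (TreeAut m)) : Prop :=
  SphericallyTransitive G ∧
    ∀ x : Fin m,
      {h : TreeAut m | ∃ g ∈ layerStab G 1, g.sec [x] = h} = (G : Set (TreeAut m))

/-- A spherically transitive group is very strongly fractal if
`St_G(n+1)|_x = St_G(n)` for all `n` and `x ∈ X`. -/
def VeryStronglyFractal (G : Subgroup (TreeAut m)) : Prop :=
  SphericallyTransitive G ∧
    ∀ (n : ℕ) (x : Fin m),
      {h : TreeAut m | ∃ g ∈ layerStab G (n + 1), g.sec [x] = h}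
        = (layerStab G n : Set (TreeAut m))

/-- A group of tree automorphisms is contracting if it has a finite nucleus. -/
def Contracting (G : Subgroup (TreeAut m)) : Prop :=
  ∃ N : Set (TreeAut m), N.Finite ∧ N ⊆ (G : Set (TreeAut m)) ∧
    ∀ g ∈ G, ∃ k : ℕ, ∀ v : List (Fin m), k < v.length → g.sec v ∈ N

/-- A tree automorphism is finite-state if it has finitely many distinct sections. -/
def FiniteState (f : TreeAut m) : Prop :=
  {h : TreeAut m | ∃ u : List (Fin m), f.sec u = h}.Finite

/-- A tree automorphism is bounded if the number of nontrivial sections at the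
`n`-th layer is bounded uniformly in `n`. -/
def BoundedAut (f : TreeAut m) : Prop :=
  ∃ C : ℕ, ∀ n : ℕ, {u : List (Fin m) | u.length = n ∧ f.sec u ≠ 1}.ncard ≤ C

/-- The `n`-th rigid layer stabiliser: the subgroup generated by the rigid vertex
stabilisers of the vertices of the `n`-th layer. -/
def rigidLayerStab (G : Subgroup (TreeAut m)) (n : ℕ) : Subgroup (TreeAut m) :=
  Subgroup.closure {g | g ∈ G ∧ ∃ v : List (Fin m), v.length = n ∧
    ∀ u : List (Fin m), ¬ v <+: u → g.apply u = u}

/-- A weakly branch group: spherically transitive with nontrivial rigid layer stabilisers. -/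
def WeaklyBranch (G : Subgroup (TreeAut m)) : Prop :=
  SphericallyTransitive G ∧ ∀ n : ℕ, rigidLayerStab G n ≠ ⊥

/-- `H` is weakly regular branch over `K ≤ H` if `ψ₁(St_K(1)) ⊇ K × ⋯ × K`. -/
def WeaklyRegularBranchOver (H K : Subgroup (TreeAut m)) : Prop :=
  K ≤ H ∧ ∀ f : Fin m → TreeAut m, (∀ x, f x ∈ K) → TreeAut.cons 1 f ∈ K

/-- The portrait of the `i`-th Basilica monomorphism `β^s_i` applied to `g`,
computed by recursion over vertices. -/
def betaLabel [NeZero m] (s : ℕ) : List (Fin m) → ℕ → TreeAut m → Equiv.Perm (Fin m)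
  | [], i, g => if i = 0 then g.label [] else 1
  | x :: u, i, g =>
      if i = 0 then betaLabel s u (s - 1) (g.sec [x])
      else if x = 0 then betaLabel s u (i - 1) g else 1

/-- The Basilica monomorphism `β^s_i : Aut(T) → Aut(T)`, satisfying
`β_i(g) = ψ₁⁻¹(β_{i-1}(g), 1, …, 1)` for `1 ≤ i ≤ s-1` and
`β_0(g) = g|^ε · ψ₁⁻¹(β_{s-1}(g|_0), …, β_{s-1}(g|_{m-1}))`. -/
def betaAut [NeZero m] (s i : ℕ) (g : TreeAut m) : TreeAut m := ⟨fun u => betaLabel s u i g⟩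

/-- The `s`-th Basilica group of `G`. -/
def basilica [NeZero m] (s : ℕ) (G : Subgroup (TreeAut m)) : Subgroup (TreeAut m) :=
  Subgroup.closure {b | ∃ g ∈ G, ∃ i < s, b = betaAut s i g}

/-- The subgroup `S_i = ⟨β_j(G) : j ≠ i⟩` of the `s`-th Basilica group. -/
def Ssub [NeZero m] (s i : ℕ) (G : Subgroup (TreeAut m)) : Subgroup (TreeAut m) :=
  Subgroup.closure {b | ∃ g ∈ G, ∃ j < s, j ≠ i ∧ b = betaAut s j g}

/-- The normal closure `N_i` of `S_i` in the `s`-th Basilica group of `G`. -/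
def Nsub [NeZero m] (s i : ℕ) (G : Subgroup (TreeAut m)) : Subgroup (TreeAut m) :=
  Subgroup.closure {x | ∃ b ∈ basilica s G, ∃ y ∈ Ssub s i G, x = b * y * b⁻¹}

/-- The `i`-th splitting kernel `K_i = β_i⁻¹(β_i(G) ∩ N_i)` of `G`, as a set. -/
def Kset [NeZero m] (s i : ℕ) (G : Subgroup (TreeAut m)) : Set (TreeAut m) :=
  {g | g ∈ G ∧ betaAut s i g ∈ Nsub s i G}

/-- The portrait of the monomorphism `π_i` (for the `d`-fold diagonal construction). -/
def piLabel (d : ℕ) : List (Fin m) → ℕ → TreeAut m → Equiv.Perm (Fin m)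
  | [], i, g => if i = 0 then g.label [] else 1
  | x :: u, i, g =>
      if i = 0 then piLabel d u (d - 1) (g.sec [x])
      else piLabel d u (i - 1) g

/-- The monomorphism `π_i : Aut(T) → Aut(T)`, satisfying
`π_0(g) = g|^ε · ψ₁⁻¹(π_{d-1}(g|_0), …, π_{d-1}(g|_{m-1}))` and
`π_i(g) = ψ₁⁻¹(π_{i-1}(g), …, π_{i-1}(g))` for `1 ≤ i ≤ d-1`. -/
def piAut (d i : ℕ) (g : TreeAut m) : TreeAut m := ⟨fun u => piLabel d u i g⟩

/-- The generator of the `m`-adic odometer: `a = σ · ψ₁⁻¹(a, 1, …, 1)` with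
`σ = (0 1 … m-1)`. -/
def odometer (m : ℕ) [NeZero m] : TreeAut m :=
  ⟨fun u => if ∀ x ∈ u, x = 0 then finRotate m else 1⟩

/-- The group `O_m^d = D_d(O_m) = ⟨π_i(a) : 0 ≤ i ≤ d-1⟩`. -/
def OdPow (m d : ℕ) [NeZero m] : Subgroup (TreeAut m) :=
  Subgroup.closure {x | ∃ i < d, x = piAut d i (odometer m)}

/-- The group `Γ` of all automorphisms all of whose labels are powers of the
cycle `σ = (0 1 … m-1)`. -/
def Gamma (m : ℕ) : Subgroup (TreeAut m) where
  carrier := {g | ∀ u : List (Fin m), g.label u ∈ Subgroup.zpowers (finRotate m)}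
  one_mem' := by
    intro u
    rw [TreeAut.one_label]
    exact one_mem _
  mul_mem' := by
    intro a b ha hb u
    rw [TreeAut.mul_label]
    exact mul_mem (ha _) (hb _)
  inv_mem' := by
    intro a ha u
    rw [TreeAut.inv_label]
    exact inv_mem (ha _)

/-- The Hausdorff dimension of `G ≤ Γ` relative to `Γ`. -/
noncomputable def hdim (m : ℕ) (G : Subgroup (TreeAut m)) : ℝ :=
  Filter.liminf (fun n : ℕ =>
    Real.logb m ((layerStab G n).relIndex G) /
      Real.logb m ((layerStab (Gamma m) n).relIndex (Gamma m))) Filter.atTop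

/-- The series of obstructions `o_G(n) = m·log_m|L_G(n-1)| - log_m|L_G(n)|` (for `n ≥ 1`),
where `L_G(n) = St_G(n)/St_G(n+1)`. -/
noncomputable def obstruction (m : ℕ) (G : Subgroup (TreeAut m)) (n : ℕ) : ℝ :=
  m * Real.logb m ((layerStab G n).relIndex (layerStab G (n - 1)))
    - Real.logb m ((layerStab G (n + 1)).relIndex (layerStab G n))

/-- The permutation group induced by `G` on the first layer acts regularly on `X`. -/
def RegularRootAction (G : Subgroup (TreeAut m)) : Prop :=
  (∀ x y : Fin m, ∃ g ∈ G, g.label [] x = y) ∧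
    ∀ g ∈ G, ∀ x : Fin m, g.label [] x = x → g.label [] = 1


/-!
An element `b` of `B = Bas_s(G)` is congruent modulo `N_0` to some `β_0(g)`, since the other
generators `β_j(G)` lie in `N_0` and `B` normalises `N_0`. If `b ^ n = 1`, then `β_0(g ^ n) ∈ N_0`,
i.e. `g ^ n ∈ K_0`; torsion-freeness of `G / K_0` gives `g ∈ K_0`, hence `b ∈ N_0`. Elements of
`N_0` fix the first layer, so the first-layer sections of `b` are again torsion elements of `B`
(which is closed under sections because `G` is). Descending along any vertex, every label of `b`
is trivial.
-/

namespace TreeAut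

lemma label_cons (a : TreeAut m) (x : Fin m) (u : List (Fin m)) :
    a.label (x :: u) = (a.sec [x]).label u := rfl

lemma mul_sec_singleton (a b : TreeAut m) (x : Fin m) :
    (a * b).sec [x] = a.sec [b.label [] x] * b.sec [x] :=
  mul_sec a b [x]

lemma inv_sec (a : TreeAut m) (v : List (Fin m)) : a⁻¹.sec v = (a.sec (a⁻¹.apply v))⁻¹ := by
  refine (inv_eq_of_mul_eq_one_right ?_).symm
  rw [← mul_sec, mul_inv_cancel, one_sec]

lemma pow_sec_of_apply_eq {a : TreeAut m} {v : List (Fin m)} (ha : a.apply v = v) (n : ℕ) :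
    (a ^ n).sec v = a.sec v ^ n := by
  induction n with
  | zero => rfl
  | succ n ih => rw [pow_succ, pow_succ, mul_sec, ha, ih]

def rootHom : TreeAut m →* Equiv.Perm (Fin m) where
  toFun a := a.label []
  map_one' := rfl
  map_mul' _ _ := rfl

@[simp] lemma rootHom_apply (a : TreeAut m) : rootHom a = a.label [] := rfl

lemma sec_singleton_mem_of_mem_closure {S : Set (TreeAut m)} {H : Subgroup (TreeAut m)}
    (hS : ∀ a ∈ S, ∀ x, a.sec [x] ∈ H) {a : TreeAut m} (ha : a ∈ Subgroup.closure S)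
    (x : Fin m) : a.sec [x] ∈ H := by
  induction ha using Subgroup.closure_induction generalizing x with
  | mem a ha => exact hS a ha x
  | one => exact H.one_mem
  | mul a b _ _ iha ihb => rw [mul_sec_singleton]; exact mul_mem (iha _) (ihb _)
  | inv a _ iha => rw [inv_sec]; exact inv_mem (iha _)

lemma eq_one_of_pow_eq_one_of_sec_mem {H : Subgroup (TreeAut m)} {n : ℕ}
    (hsec : ∀ a ∈ H, ∀ x, a.sec [x] ∈ H) (hroot : ∀ a ∈ H, a ^ n = 1 → a.label [] = 1)
    {a : TreeAut m} (ha : a ∈ H) (han : a ^ n = 1) : a = 1 := by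
  suffices h : ∀ u (a : TreeAut m), a ∈ H → a ^ n = 1 → a.label u = 1 from
    ext_label fun u => h u a ha han
  intro u
  induction u with
  | nil => exact hroot
  | cons x u ih =>
      intro a ha han
      have hfix : a.apply [x] = [x] := by rw [apply_cons, hroot a ha han]; rfl
      rw [label_cons]
      refine ih _ (hsec a ha x) ?_
      rw [← pow_sec_of_apply_eq hfix, han, one_sec]

end TreeAut

lemma inv_pow_mul_pow_mem {K : Type*} [Group K] {N : Subgroup K} {a b : K}
    (ha : a ∈ Subgroup.normalizer N) (hab : a⁻¹ * b ∈ N) (k : ℕ) : (a ^ k)⁻¹ * b ^ k ∈ N := by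
  induction k with
  | zero => simp
  | succ k ih =>
      have hconj : a⁻¹ * ((a ^ k)⁻¹ * b ^ k) * a ∈ N :=
        (Subgroup.mem_normalizer_iff''.mp ha _).mp ih
      have h := mul_mem hconj hab
      rwa [show a⁻¹ * ((a ^ k)⁻¹ * b ^ k) * a * (a⁻¹ * b) = (a ^ (k + 1))⁻¹ * b ^ (k + 1) by group]
        at h

section BasilicaGroup

variable [NeZero m]

lemma betaAut_label_nil (s i : ℕ) (g : TreeAut m) :
    (betaAut s i g).label [] = if i = 0 then g.label [] else 1 := rfl

lemma betaAut_sec (s i : ℕ) (g : TreeAut m) (x : Fin m) :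
    (betaAut s i g).sec [x] =
      if i = 0 then betaAut s (s - 1) (g.sec [x])
      else if x = 0 then betaAut s (i - 1) g else 1 := by
  refine TreeAut.ext_label fun u => ?_
  show betaLabel s (x :: u) i g = _
  rw [betaLabel]
  split_ifs <;> rfl

lemma betaAut_mul (s i : ℕ) (g h : TreeAut m) :
    betaAut s i (g * h) = betaAut s i g * betaAut s i h := by
  refine TreeAut.ext_label fun u => ?_
  induction u generalizing i g h with
  | nil => simp only [betaAut_label_nil, TreeAut.mul_label, TreeAut.apply_nil]; split_ifs <;> simp
  | cons x u ih =>
      rw [TreeAut.label_cons, TreeAut.label_cons, TreeAut.mul_sec_singleton, betaAut_sec,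
        betaAut_sec, betaAut_sec, betaAut_label_nil, TreeAut.mul_sec_singleton]
      by_cases hi : i = 0 <;> by_cases hx : x = 0 <;> simp [hi, hx, ih]

def betaHom (s i : ℕ) : TreeAut m →* TreeAut m := MonoidHom.mk' (betaAut s i) (betaAut_mul s i)

@[simp] lemma betaHom_apply (s i : ℕ) (g : TreeAut m) : betaHom s i g = betaAut s i g := rfl

variable {s : ℕ} {G : Subgroup (TreeAut m)}

lemma betaAut_mem_basilica {g : TreeAut m} (hg : g ∈ G) {i : ℕ} (hi : i < s) :
    betaAut s i g ∈ basilica s G :=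
  Subgroup.subset_closure ⟨g, hg, i, hi, rfl⟩

lemma sec_mem_basilica (hs : 1 ≤ s) (hss : SelfSimilar G) {b : TreeAut m}
    (hb : b ∈ basilica s G) (x : Fin m) : b.sec [x] ∈ basilica s G := by
  refine TreeAut.sec_singleton_mem_of_mem_closure ?_ hb x
  rintro _ ⟨g, hg, i, hi, rfl⟩ x
  rw [betaAut_sec]
  split_ifs
  · exact betaAut_mem_basilica (hss g hg [x]) (by omega)
  · exact betaAut_mem_basilica hg (by omega)
  · exact one_mem _

lemma Ssub_le_Nsub (i : ℕ) : Ssub s i G ≤ Nsub s i G := fun y hy =>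
  Subgroup.subset_closure ⟨1, one_mem _, y, hy, by group⟩

lemma basilica_le_normalizer_Nsub (i : ℕ) :
    basilica s G ≤ Subgroup.normalizer (Nsub s i G : Set (TreeAut m)) := by
  refine Subgroup.le_normalizer_closure_iff.mpr ?_
  rintro a ha _ ⟨b, hb, y, hy, rfl⟩
  exact Subgroup.subset_closure ⟨a * b, mul_mem ha hb, y, hy, by group⟩

lemma Nsub_zero_le_ker_rootHom : Nsub s 0 G ≤ TreeAut.rootHom.ker := by
  have hS : Ssub s 0 G ≤ TreeAut.rootHom.ker := by
    rw [Ssub, Subgroup.closure_le]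
    rintro _ ⟨g, -, j, -, hj, rfl⟩
    simp [betaAut_label_nil, hj]
  rw [Nsub, Subgroup.closure_le]
  rintro _ ⟨b, -, y, hy, rfl⟩
  exact TreeAut.rootHom.normal_ker.conj_mem y (hS hy) b

lemma exists_betaAut_zero_inv_mul_mem_Nsub (hs : 1 ≤ s) {b : TreeAut m}
    (hb : b ∈ basilica s G) : ∃ g ∈ G, (betaAut s 0 g)⁻¹ * b ∈ Nsub s 0 G := by
  have hnorm {g : TreeAut m} (hg : g ∈ G) :
      betaAut s 0 g ∈ Subgroup.normalizer (Nsub s 0 G : Set (TreeAut m)) :=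
    basilica_le_normalizer_Nsub 0 (betaAut_mem_basilica hg hs)
  have hone : betaAut s 0 (1 : TreeAut m) = 1 := map_one (betaHom s 0)
  induction hb using Subgroup.closure_induction with
  | mem c hc =>
      obtain ⟨g, hg, i, hi, rfl⟩ := hc
      by_cases hi0 : i = 0
      · subst hi0
        exact ⟨g, hg, by simp⟩
      · refine ⟨1, one_mem _, ?_⟩
        rw [hone, inv_one, one_mul]
        exact Ssub_le_Nsub 0 (Subgroup.subset_closure ⟨g, hg, i, hi, hi0, rfl⟩)
  | one => exact ⟨1, one_mem _, by simp [hone]⟩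
  | mul b c _ _ ihb ihc =>
      obtain ⟨g, hg, hbg⟩ := ihb
      obtain ⟨h, hh, hch⟩ := ihc
      refine ⟨g * h, mul_mem hg hh, ?_⟩
      have hconj := (Subgroup.mem_normalizer_iff''.mp (hnorm hh) _).mp hbg
      rw [show (betaAut s 0 (g * h))⁻¹ * (b * c) =
          (betaAut s 0 h)⁻¹ * ((betaAut s 0 g)⁻¹ * b) * betaAut s 0 h * ((betaAut s 0 h)⁻¹ * c) by
        rw [betaAut_mul]; group]
      exact mul_mem hconj hch
  | inv b _ ihb =>
      obtain ⟨g, hg, hbg⟩ := ihb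
      refine ⟨g⁻¹, inv_mem hg, ?_⟩
      have hconj := (Subgroup.mem_normalizer_iff.mp (hnorm hg) _).mp (inv_mem hbg)
      rwa [show (betaAut s 0 g⁻¹)⁻¹ * b⁻¹ =
          betaAut s 0 g * ((betaAut s 0 g)⁻¹ * b)⁻¹ * (betaAut s 0 g)⁻¹ by
        rw [← betaHom_apply, map_inv, betaHom_apply]; group]

lemma mem_Nsub_zero_of_pow_eq_one (hs : 1 ≤ s)
    (hquot : ∀ g ∈ G, ∀ n : ℕ, 0 < n → g ^ n ∈ Kset s 0 G → g ∈ Kset s 0 G)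
    {b : TreeAut m} (hb : b ∈ basilica s G) {n : ℕ} (hn : 0 < n) (hbn : b ^ n = 1) :
    b ∈ Nsub s 0 G := by
  obtain ⟨g, hg, hbg⟩ := exists_betaAut_zero_inv_mul_mem_Nsub hs hb
  have hpow := inv_pow_mul_pow_mem (basilica_le_normalizer_Nsub 0 (betaAut_mem_basilica hg hs))
    hbg n
  rw [hbn, mul_one, ← betaHom_apply, ← map_pow] at hpow
  have hgK : g ∈ Kset s 0 G := hquot g hg n hn ⟨pow_mem hg n, by simpa using inv_mem hpow⟩
  simpa using mul_mem hgK.2 hbg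

end BasilicaGroup

theorem basilica_torsionFree_general {m : ℕ} [NeZero m]
    (s : ℕ) (hs : 1 ≤ s) (G : Subgroup (TreeAut m)) (hss : SelfSimilar G)
    (hquot : ∀ g ∈ G, ∀ n : ℕ, 0 < n → g ^ n ∈ Kset s 0 G → g ∈ Kset s 0 G) :
    ∀ b ∈ basilica s G, ∀ n : ℕ, 0 < n → b ^ n = 1 → b = 1 := by
  intro b hb n hn hbn
  refine TreeAut.eq_one_of_pow_eq_one_of_sec_mem (fun _ hc => sec_mem_basilica hs hss hc) ?_ hb hbn
  intro c hc hcn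
  exact Nsub_zero_le_ker_rootHom (mem_Nsub_zero_of_pow_eq_one hs hquot hc hn hcn)

/-- Let `s ≥ 1` and let `G ≤ Aut(T)` be a torsion-free self-similar
group such that the quotient `G/K_0` by the zeroth splitting kernel is torsion-free
(i.e. `g^n ∈ K_0` for some `n ≥ 1` implies `g ∈ K_0`). Then `Bas_s(G)` is torsion-free. -/
theorem basilica_torsionFree {m : ℕ} [NeZero m] (hm : 2 ≤ m)
    (s : ℕ) (hs : 1 ≤ s) (G : Subgroup (TreeAut m)) (hss : SelfSimilar G)
    (htf : ∀ g ∈ G, ∀ n : ℕ, 0 < n → g ^ n = 1 → g = 1)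
    (hquot : ∀ g ∈ G, ∀ n : ℕ, 0 < n → g ^ n ∈ Kset s 0 G → g ∈ Kset s 0 G) :
    ∀ b ∈ basilica s G, ∀ n : ℕ, 0 < n → b ^ n = 1 → b = 1 :=
  basilica_torsionFree_general s hs G hss hquot

end Basilica
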